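/- arXiv:2011.00334 — 6 statements merged into one kernel-verified Lean document; each statement's English description precedes it below -/
import Mathlib

section
/- Let G be a countably based profinite group with a normal filtration series {G_n} (descending open normal subgroups with trivial intersection), and let N be a closed normal subgroup of G whose Hausdorff dimension with respect to {G_n}, namely liminf log|NG_n:G_n|/log|G:G_n|, is given by a proper limit. Then for every closed subgroup H of G containing N, one has hdim(H) = (1 - hdim(N)) * hdim_{G/N}(H/N) + hdim(N), where hdim_{G/N} is computed with respect to the filtration {G_nN/N} of G/N. -/
open Filter

/-- Hausdorff dimension of a subgroup `H` of a profinite group with respect to a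
filtration series `Gn`: `liminf log|H Gₙ : Gₙ| / log|G : Gₙ|`.  Here
`|H Gₙ : Gₙ| = (Gn n).relindex H`. -/
noncomputable def hdimFil {G : Type*} [Group G] (Gn : ℕ → Subgroup G) (H : Subgroup G) : ℝ :=
  Filter.atTop.liminf fun n =>
    Real.log ((Gn n).relIndex H : ℝ) / Real.log ((Gn n).index : ℝ)


/-!
Since `G n` is normal of finite index, `|G : Gₙ| = |G : GₙN| · |GₙN : Gₙ|` and
`|HGₙ : Gₙ| = |HGₙN : GₙN| · |GₙN : Gₙ|`, with `|GₙN : Gₙ| = |NGₙ : Gₙ|`. Taking logarithms,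
the `n`-th term `h n` of the sequence defining `hdim(H)` becomes `r n * (1 - a n) + a n`, where
`a n` and `r n` are the `n`-th terms for `N` in `G` and for `H/N` in `G/N`. As `a n` converges to
`hdim(N)`, the liminf passes through this affine expression.
-/

open Topology

theorem add_div_add_eq_div_mul_one_sub_add {A D E : ℝ} (hA : 0 ≤ A) (hE : 0 ≤ E) (hED : E ≤ D) :
    (E + A) / (D + A) = E / D * (1 - A / (D + A)) + A / (D + A) := by
  rcases hED.lt_or_eq with hlt | rfl
  · have hD : 0 < D := hE.trans_lt hlt
    field_simp
    ring
  · rcases hE.lt_or_eq with hpos | rfl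
    · field_simp
      ring
    · simp

theorem liminf_add_of_tendsto_zero {ι : Type*} {l : Filter ι} [l.NeBot] {u v : ι → ℝ}
    (hu : IsBoundedUnder (· ≤ ·) l u) (hu' : IsBoundedUnder (· ≥ ·) l u)
    (hv : Tendsto v l (𝓝 0)) :
    liminf (u + v) l = liminf u l := by
  have hv_le : IsBoundedUnder (· ≤ ·) l v := hv.isBoundedUnder_le
  have hv_ge : IsBoundedUnder (· ≥ ·) l v := hv.isBoundedUnder_ge
  apply le_antisymm
  · calc liminf (u + v) l = liminf (v + u) l := by rw [add_comm]
      _ ≤ limsup v l + liminf u l := liminf_add_le hv_ge hv_le hu' hu.isCoboundedUnder_ge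
      _ = liminf u l := by rw [hv.limsup_eq, zero_add]
  · calc liminf u l = liminf u l + liminf v l := by rw [hv.liminf_eq, add_zero]
      _ ≤ liminf (u + v) l := le_liminf_add hu' hu hv_ge hv_le.isCoboundedUnder_ge

theorem liminf_mul_one_sub_add_of_tendsto {ι : Type*} {l : Filter ι} [l.NeBot] {r a : ι → ℝ}
    {d : ℝ} (hr : ∀ i, r i ∈ Set.Icc (0 : ℝ) 1) (ha : Tendsto a l (𝓝 d)) (hd : d ≤ 1) :
    liminf (fun i => r i * (1 - a i) + a i) l = (1 - d) * liminf r l + d := by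
  have hr_le : IsBoundedUnder (· ≤ ·) l r := isBoundedUnder_of ⟨1, fun i => (hr i).2⟩
  have hr_ge : IsBoundedUnder (· ≥ ·) l r := isBoundedUnder_of ⟨0, fun i => (hr i).1⟩
  set f : ℝ → ℝ := fun x => (1 - d) * x + d
  have hf_mono : Monotone f := fun x y hxy => by
    simp only [f]
    gcongr
  have herror : Tendsto (fun i => (a i - d) * (1 - r i)) l (𝓝 0) := by
    refine Tendsto.zero_mul_isBoundedUnder_le (by simpa using ha.sub_const d)
      (isBoundedUnder_of ⟨1, fun i => ?_⟩)
    simp only [Function.comp_apply, Real.norm_eq_abs, abs_le]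
    constructor <;> linarith [(hr i).1, (hr i).2]
  calc liminf (fun i => r i * (1 - a i) + a i) l
      = liminf ((f ∘ r) + fun i => (a i - d) * (1 - r i)) l := by
        congr 1
        ext i
        simp only [Pi.add_apply, Function.comp_apply, f]
        ring
    _ = liminf (f ∘ r) l := by
        refine liminf_add_of_tendsto_zero ?_ ?_ herror
        · exact hf_mono.isBoundedUnder_le_comp hr_le
        · exact hf_mono.isBoundedUnder_ge_comp hr_ge
    _ = (1 - d) * liminf r l + d :=
        (hf_mono.map_liminf_of_continuousAt r (by fun_prop) hr_le.isCoboundedUnder_ge hr_ge).symm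

namespace Subgroup

variable {G : Type*} [Group G]

/-- `log |HK : K| / log |G : K|`, which is `0` when `K` has infinite index. -/
noncomputable def logIndexRatio (K H : Subgroup G) : ℝ :=
  Real.log (K.relIndex H) / Real.log K.index

theorem log_relIndex_le_log_index (K H : Subgroup G) (hK : K.index ≠ 0) :
    Real.log (K.relIndex H) ≤ Real.log K.index := by
  rcases (K.relIndex H).eq_zero_or_pos with h0 | hpos
  · rw [h0, Nat.cast_zero, Real.log_zero]
    exact Real.log_natCast_nonneg _
  · refine Real.log_le_log (by exact_mod_cast hpos) ?_
    rw [← relIndex_top_right] at hK ⊢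
    exact_mod_cast relIndex_le_of_le_right le_top hK

theorem logIndexRatio_nonneg (K H : Subgroup G) : 0 ≤ K.logIndexRatio H :=
  div_nonneg (Real.log_natCast_nonneg _) (Real.log_natCast_nonneg _)

theorem logIndexRatio_le_one (K H : Subgroup G) : K.logIndexRatio H ≤ 1 := by
  rcases eq_or_ne K.index 0 with h0 | hK
  · simp [logIndexRatio, h0]
  · exact div_le_one_of_le₀ (log_relIndex_le_log_index K H hK) (Real.log_natCast_nonneg _)

theorem relIndex_eq_relIndex_sup_mul_relIndex (K : Subgroup G) [K.Normal] {N H : Subgroup G}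
    (hNH : N ≤ H) : K.relIndex H = (K ⊔ N).relIndex H * K.relIndex N := by
  have hjoin : (K ⊔ N) ⊓ H ⊔ K = N ⊔ K :=
    le_antisymm (sup_le (inf_le_left.trans (sup_comm K N).le) le_sup_right)
      (sup_le_sup_right (le_inf le_sup_right hNH) K)
  -- `K` being normal, `K.relIndex X` only depends on `X ⊔ K`.
  calc K.relIndex H = (K ⊓ (K ⊔ N)).relIndex H := by rw [inf_of_le_left le_sup_left]
    _ = K.relIndex ((K ⊔ N) ⊓ H) * (K ⊔ N).relIndex H := (relIndex_inf_mul_relIndex _ _ _).symm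
    _ = (K ⊔ N).relIndex H * K.relIndex N := by
        rw [← relIndex_sup_right, hjoin, relIndex_sup_right, mul_comm]

theorem logIndexRatio_eq_logIndexRatio_sup (K : Subgroup G) [K.Normal] (hK : K.index ≠ 0)
    {N H : Subgroup G} (hNH : N ≤ H) :
    K.logIndexRatio H =
      (K ⊔ N).logIndexRatio H * (1 - K.logIndexRatio N) + K.logIndexRatio N := by
  have hindex : K.index = (K ⊔ N).index * K.relIndex N := by
    simpa using K.relIndex_eq_relIndex_sup_mul_relIndex (le_top : N ≤ ⊤)
  have hrel := K.relIndex_eq_relIndex_sup_mul_relIndex hNH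
  have hsup : (K ⊔ N).index ≠ 0 := left_ne_zero_of_mul (hindex ▸ hK)
  have hN : K.relIndex N ≠ 0 := right_ne_zero_of_mul (hindex ▸ hK)
  have hH : (K ⊔ N).relIndex H ≠ 0 :=
    left_ne_zero_of_mul (hrel ▸ mt index_eq_zero_of_relIndex_eq_zero hK)
  unfold logIndexRatio
  rw [hrel, hindex]
  push_cast
  rw [Real.log_mul (by exact_mod_cast hH) (by exact_mod_cast hN),
    Real.log_mul (by exact_mod_cast hsup) (by exact_mod_cast hN)]
  exact add_div_add_eq_div_mul_one_sub_add (Real.log_natCast_nonneg _)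
    (Real.log_natCast_nonneg _) ((K ⊔ N).log_relIndex_le_log_index H hsup)

theorem logIndexRatio_map_mk' (K H N : Subgroup G) [N.Normal] :
    (K.map (QuotientGroup.mk' N)).logIndexRatio (H.map (QuotientGroup.mk' N)) =
      (K ⊔ N).logIndexRatio H := by
  rw [logIndexRatio, logIndexRatio, index_map, ← relIndex_comap, comap_map_eq,
    MonoidHom.range_eq_top_of_surjective _ (QuotientGroup.mk'_surjective N), index_top, mul_one,
    QuotientGroup.ker_mk']

end Subgroup

theorem hdimFil_eq_liminf_logIndexRatio {G : Type*} [Group G] (Gn : ℕ → Subgroup G)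
    (H : Subgroup G) : hdimFil Gn H = liminf (fun n => (Gn n).logIndexRatio H) atTop :=
  rfl

open Subgroup in
theorem quotient_hausdorff_dimension_formula_general
    {G : Type*} [Group G] [TopologicalSpace G] [IsTopologicalGroup G] [CompactSpace G]
    (Gn : ℕ → Subgroup G)
    (hopen : ∀ n, IsOpen (Gn n : Set G)) (hnorm : ∀ n, (Gn n).Normal)
    (N : Subgroup G) [N.Normal]
    (hNproper : Filter.Tendsto
      (fun n => Real.log ((Gn n).relIndex N : ℝ) / Real.log ((Gn n).index : ℝ))
      Filter.atTop (nhds (hdimFil Gn N)))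
    (H : Subgroup G) (hNH : N ≤ H) :
    hdimFil Gn H =
      (1 - hdimFil Gn N) *
        hdimFil (fun n => (Gn n).map (QuotientGroup.mk' N)) (H.map (QuotientGroup.mk' N)) +
      hdimFil Gn N := by
  have hfinite : ∀ n, (Gn n).index ≠ 0 := fun n =>
    have := (Gn n).quotient_finite_of_isOpen (hopen n)
    index_ne_zero_of_finite
  have hsplit : ∀ n, (Gn n).logIndexRatio H =
      (Gn n ⊔ N).logIndexRatio H * (1 - (Gn n).logIndexRatio N) + (Gn n).logIndexRatio N :=
    fun n => have := hnorm n; (Gn n).logIndexRatio_eq_logIndexRatio_sup (hfinite n) hNH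
  have hN_le_one : hdimFil Gn N ≤ 1 := le_of_tendsto' hNproper fun n => logIndexRatio_le_one _ _
  rw [hdimFil_eq_liminf_logIndexRatio Gn H, funext hsplit,
    hdimFil_eq_liminf_logIndexRatio _ (H.map _)]
  simp only [logIndexRatio_map_mk']
  exact liminf_mul_one_sub_add_of_tendsto
    (fun n => ⟨logIndexRatio_nonneg _ _, logIndexRatio_le_one _ _⟩) hNproper hN_le_one

theorem quotient_hausdorff_dimension_formula
    {G : Type*} [Group G] [TopologicalSpace G] [IsTopologicalGroup G] [CompactSpace G]
    [TotallyDisconnectedSpace G] [T2Space G] [SecondCountableTopology G]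
    (Gn : ℕ → Subgroup G)
    (hopen : ∀ n, IsOpen (Gn n : Set G)) (hnorm : ∀ n, (Gn n).Normal)
    (hdesc : ∀ n, Gn (n + 1) ≤ Gn n) (hinter : ⨅ n, Gn n = ⊥)
    (N : Subgroup G) [N.Normal] (hNclosed : IsClosed (N : Set G))
    (hNproper : Filter.Tendsto
      (fun n => Real.log ((Gn n).relIndex N : ℝ) / Real.log ((Gn n).index : ℝ))
      Filter.atTop (nhds (hdimFil Gn N)))
    (H : Subgroup G) (hHclosed : IsClosed (H : Set G)) (hNH : N ≤ H) :
    hdimFil Gn H =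
      (1 - hdimFil Gn N) *
        hdimFil (fun n => (Gn n).map (QuotientGroup.mk' N)) (H.map (QuotientGroup.mk' N)) +
      hdimFil Gn N :=
  quotient_hausdorff_dimension_formula_general Gn hopen hnorm N hNproper H hNH
end

section
/- Let G be a countably based profinite group with normal filtration series {G_n}, let H be a closed subgroup of G whose Hausdorff dimension with respect to {G_n} is given by a proper limit. Then for every closed subgroup K of H, hdim^G(K) = hdim^G(H) · hdim^H(K), where hdim^H(K) is the Hausdorff dimension of K in H computed with respect to the filtration {H ∩ G_n}. -/
open Filter

/-! Writing `|K Gₙ : Gₙ| / |G : Gₙ|` on a logarithmic scale as the product of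
`|H Gₙ : Gₙ| / |G : Gₙ|` and `|K Gₙ : Gₙ| / |H Gₙ : Gₙ|`, the first factor converges to
`hdim^G(H)` and the second lies in `[0, 1]` with liminf `hdim^H(K)`; a convergent nonnegative
factor can be pulled out of a liminf. -/

open Topology

theorem Filter.Tendsto.liminf_mul_eq_mul_liminf {ι : Type*} {f : Filter ι} [f.NeBot]
    {u v : ι → ℝ} {L : ℝ} (hu : Tendsto u f (𝓝 L)) (hu₀ : 0 ≤ᶠ[f] u) (hv₀ : 0 ≤ᶠ[f] v)
    (hv : IsCoboundedUnder (· ≥ ·) f v) :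
    liminf (u * v) f = L * liminf v f := by
  have hu_bdd : IsBoundedUnder (· ≤ ·) f u := hu.isBoundedUnder_le
  apply le_antisymm
  · calc liminf (u * v) f ≤ limsup u f * liminf v f := liminf_mul_le hu₀ hu_bdd hv₀ hv
      _ = L * liminf v f := by rw [hu.limsup_eq]
  · calc L * liminf v f = liminf u f * liminf v f := by rw [hu.liminf_eq]
      _ ≤ liminf (u * v) f := le_liminf_mul hu₀ hu_bdd hv₀ hv

theorem div_eq_div_mul_div_of_eq_zero_imp {F : Type*} [Field F] {a b c : F}
    (h : b = 0 → a = 0) : a / c = b / c * (a / b) := by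
  rcases eq_or_ne b 0 with hb | hb
  · simp [hb, h hb]
  · exact (div_mul_div_cancel₀' hb c a).symm

namespace Subgroup

variable {G : Type*} [Group G] {N K H : Subgroup G}

theorem log_relIndex_le_log_relIndex [N.FiniteIndex] (hKH : K ≤ H) :
    Real.log (N.relIndex K) ≤ Real.log (N.relIndex H) := by
  have : N.IsFiniteRelIndex K := isFiniteRelIndex_of_finiteIndex
  have : N.IsFiniteRelIndex H := isFiniteRelIndex_of_finiteIndex
  apply Real.log_le_log (by exact_mod_cast Nat.pos_of_ne_zero relIndex_ne_zero)
  exact_mod_cast relIndex_le_of_le_right hKH relIndex_ne_zero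

theorem log_relIndex_div_log_relIndex_mem_Icc [N.FiniteIndex] (hKH : K ≤ H) :
    Real.log (N.relIndex K) / Real.log (N.relIndex H) ∈ Set.Icc 0 1 :=
  ⟨div_nonneg (Real.log_natCast_nonneg _) (Real.log_natCast_nonneg _),
    div_le_one_of_le₀ (log_relIndex_le_log_relIndex hKH) (Real.log_natCast_nonneg _)⟩

theorem log_relIndex_div_log_index_eq_mul [N.FiniteIndex] (hKH : K ≤ H) :
    Real.log (N.relIndex K) / Real.log N.index =
      Real.log (N.relIndex H) / Real.log N.index *
        (Real.log (N.relIndex K) / Real.log (N.relIndex H)) :=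
  div_eq_div_mul_div_of_eq_zero_imp fun h =>
    le_antisymm (h ▸ log_relIndex_le_log_relIndex hKH) (Real.log_natCast_nonneg _)

end Subgroup

theorem hdimFil_subgroupOf {G : Type*} [Group G] (Gn : ℕ → Subgroup G) {K H : Subgroup G}
    (hKH : K ≤ H) :
    hdimFil (fun n => (Gn n).subgroupOf H) (K.subgroupOf H) =
      atTop.liminf fun n =>
        Real.log ((Gn n).relIndex K : ℝ) / Real.log ((Gn n).relIndex H : ℝ) := by
  simp only [hdimFil, Subgroup.relIndex_subgroupOf hKH]
  rfl

theorem hausdorff_dimension_multiplicative_general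
    {G : Type*} [Group G] [TopologicalSpace G] [IsTopologicalGroup G] [CompactSpace G]
    (Gn : ℕ → Subgroup G)
    (hopen : ∀ n, IsOpen (Gn n : Set G))
    (H : Subgroup G)
    (hHproper : Filter.Tendsto
      (fun n => Real.log ((Gn n).relIndex H : ℝ) / Real.log ((Gn n).index : ℝ))
      Filter.atTop (nhds (hdimFil Gn H)))
    (K : Subgroup G) (hKH : K ≤ H) :
    hdimFil Gn K =
      hdimFil Gn H * hdimFil (fun n => (Gn n).subgroupOf H) (K.subgroupOf H) := by
  have hfin (n : ℕ) : (Gn n).FiniteIndex :=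
    Subgroup.finiteIndex_iff_finite_quotient.2 (Subgroup.quotient_finite_of_isOpen _ (hopen n))
  set u := fun n => Real.log ((Gn n).relIndex H : ℝ) / Real.log ((Gn n).index : ℝ)
  set v := fun n => Real.log ((Gn n).relIndex K : ℝ) / Real.log ((Gn n).relIndex H : ℝ)
  have hv (n : ℕ) : v n ∈ Set.Icc 0 1 := Subgroup.log_relIndex_div_log_relIndex_mem_Icc hKH
  have hfactor : (fun n => Real.log ((Gn n).relIndex K : ℝ) / Real.log ((Gn n).index : ℝ)) =
      u * v := funext fun n => Subgroup.log_relIndex_div_log_index_eq_mul hKH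
  rw [hdimFil_subgroupOf Gn hKH, hdimFil, hfactor]
  exact hHproper.liminf_mul_eq_mul_liminf
    (Eventually.of_forall fun n => div_nonneg (Real.log_natCast_nonneg _)
      (Real.log_natCast_nonneg _))
    (Eventually.of_forall fun n => (hv n).1)
    (isBoundedUnder_of_eventually_le (Eventually.of_forall fun n => (hv n).2)).isCoboundedUnder_ge

theorem hausdorff_dimension_multiplicative
    {G : Type*} [Group G] [TopologicalSpace G] [IsTopologicalGroup G] [CompactSpace G]
    [TotallyDisconnectedSpace G] [T2Space G] [SecondCountableTopology G]
    (Gn : ℕ → Subgroup G)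
    (hopen : ∀ n, IsOpen (Gn n : Set G)) (hnorm : ∀ n, (Gn n).Normal)
    (hdesc : ∀ n, Gn (n + 1) ≤ Gn n) (hinter : ⨅ n, Gn n = ⊥)
    (H : Subgroup G) (hHclosed : IsClosed (H : Set G))
    (hHproper : Filter.Tendsto
      (fun n => Real.log ((Gn n).relIndex H : ℝ) / Real.log ((Gn n).index : ℝ))
      Filter.atTop (nhds (hdimFil Gn H)))
    (K : Subgroup G) (hKH : K ≤ H) (hKclosed : IsClosed (K : Set G)) :
    hdimFil Gn K =
      hdimFil Gn H * hdimFil (fun n => (Gn n).subgroupOf H) (K.subgroupOf H) :=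
  hausdorff_dimension_multiplicative_general Gn hopen H hHproper K hKH
end

section
/- Let G be a countably based profinite group with normal filtration series {G_n}, and let N ⊴ K ≤ G be closed subgroups such that hdim(N) = η and hdim(K) = κ are given by proper limits. If the Hausdorff spectrum of K/N with respect to the filtration {(K ∩ G_n)N/N} equals the full interval [0,1], then the closed interval [η, κ] is contained in the Hausdorff spectrum of G with respect to {G_n}. -/
/-!
Let `H` be the preimage in `K` of a closed subgroup `L ≤ K/N`, and let `Qₙ = (K ∩ Gₙ)N/N`.
At every level the indices factor as `|HGₙ : Gₙ| = |NGₙ : Gₙ| · |LQₙ : Qₙ|` and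
`|KGₙ : Gₙ| = |NGₙ : Gₙ| · |K/N : Qₙ|`, so the level-`n` ratio of `H` is `aₙ + (cₙ - aₙ) bₙ`,
where `aₙ`, `cₙ`, `bₙ` are the ratios of `N`, `K` (in `G`) and `L` (in `K/N`).
Since `aₙ → η` and `cₙ → κ` are proper limits, taking `liminf` gives
`hdim H = η + (κ - η) · hdim L`, and letting `hdim L` run through `[0, 1]` fills `[η, κ]`.
-/

open Filter

/-- The Hausdorff spectrum with respect to a filtration series: the set of Hausdorff
dimensions of closed subgroups. -/
noncomputable def hspecFil (G : Type*) [Group G] [TopologicalSpace G]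
    (Gn : ℕ → Subgroup G) : Set ℝ :=
  {r : ℝ | ∃ H : Subgroup G, IsClosed (H : Set G) ∧ hdimFil Gn H = r}

open Topology

namespace Filter.Tendsto
variable {ι : Type*} {f : Filter ι} [f.NeBot] {u v : ι → ℝ} {a : ℝ}

lemma liminf_add_eq (hu : Tendsto u f (𝓝 a)) (hv : IsBoundedUnder (· ≥ ·) f v)
    (hv' : IsCoboundedUnder (· ≥ ·) f v) : liminf (u + v) f = a + liminf v f := by
  refine le_antisymm ?_ ?_
  · simpa [hu.limsup_eq] using liminf_add_le hu.isBoundedUnder_ge hu.isBoundedUnder_le hv hv'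
  · simpa [hu.liminf_eq] using le_liminf_add hu.isBoundedUnder_ge hu.isBoundedUnder_le hv hv'

lemma liminf_mul_eq (hu : Tendsto u f (𝓝 a)) (hu0 : 0 ≤ᶠ[f] u) (hv0 : 0 ≤ᶠ[f] v)
    (hv : IsCoboundedUnder (· ≥ ·) f v) : liminf (u * v) f = a * liminf v f := by
  refine le_antisymm ?_ ?_
  · simpa [hu.limsup_eq] using liminf_mul_le hu0 hu.isBoundedUnder_le hv0 hv
  · simpa [hu.liminf_eq] using le_liminf_mul hu0 hu.isBoundedUnder_le hv0 hv

lemma liminf_add_mul_eq {w : ι → ℝ} {b : ℝ} (hu : Tendsto u f (𝓝 a)) (hv : Tendsto v f (𝓝 b))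
    (hv0 : 0 ≤ᶠ[f] v) (hw0 : 0 ≤ᶠ[f] w) (hw : IsBoundedUnder (· ≤ ·) f w) :
    liminf (u + v * w) f = a + b * liminf w f := by
  have hvw0 : 0 ≤ᶠ[f] v * w := by
    filter_upwards [hv0, hw0] with i hvi hwi using mul_nonneg hvi hwi
  have hvw : IsBoundedUnder (· ≤ ·) f (v * w) :=
    isBoundedUnder_le_mul_of_nonneg hv0.frequently hv.isBoundedUnder_le hw0 hw
  rw [hu.liminf_add_eq (isBoundedUnder_of_eventually_ge hvw0) hvw.isCoboundedUnder_ge,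
    hv.liminf_mul_eq hv0 hw0 hw.isCoboundedUnder_ge]

end Filter.Tendsto

section LogIndexRatio
variable {G : Type*} [Group G]

noncomputable def logIndexRatio (Γ H : Subgroup G) : ℝ :=
  Real.log (Γ.relIndex H : ℝ) / Real.log (Γ.index : ℝ)

lemma hdimFil_eq_liminf (Gn : ℕ → Subgroup G) (H : Subgroup G) :
    hdimFil Gn H = atTop.liminf fun n => logIndexRatio (Gn n) H := rfl

lemma logIndexRatio_nonneg (Γ H : Subgroup G) : 0 ≤ logIndexRatio Γ H :=
  div_nonneg (Real.log_natCast_nonneg _) (Real.log_natCast_nonneg _)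

lemma logIndexRatio_mono (Γ : Subgroup G) [Γ.FiniteIndex] {H K : Subgroup G} (hHK : H ≤ K) :
    logIndexRatio Γ H ≤ logIndexRatio Γ K := by
  have hK : Γ.relIndex K ≠ 0 := (Γ.isFiniteRelIndex_of_finiteIndex (K := K)).relIndex_ne_zero
  have hH : Γ.relIndex H ≠ 0 := (Γ.isFiniteRelIndex_of_finiteIndex (K := H)).relIndex_ne_zero
  refine div_le_div_of_nonneg_right (Real.log_le_log (by positivity) ?_)
    (Real.log_natCast_nonneg _)
  exact_mod_cast Subgroup.relIndex_le_of_le_right hHK hK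

lemma logIndexRatio_le_one (Γ H : Subgroup G) : logIndexRatio Γ H ≤ 1 := by
  rcases eq_or_ne Γ.index 0 with h | h
  · simp [logIndexRatio, h]
  have : Γ.FiniteIndex := ⟨h⟩
  refine (logIndexRatio_mono Γ le_top).trans ?_
  rw [logIndexRatio, Subgroup.relIndex_top_right]
  exact div_self_le_one _

end LogIndexRatio

namespace Subgroup
variable {G : Type*} [Group G]

lemma relIndex_le_index (H K : Subgroup G) [H.FiniteIndex] : H.relIndex K ≤ H.index := by
  simpa only [relIndex_top_right] using
    relIndex_le_of_le_right le_top (relIndex_top_right H ▸ FiniteIndex.index_ne_zero)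

variable {N K : Subgroup G} [(N.subgroupOf K).Normal]

variable (N K) in
/-- `(K ∩ Γ)N/N`, as a subgroup of `K/N`. -/
def quotientImage (Γ : Subgroup G) : Subgroup (K ⧸ N.subgroupOf K) :=
  (Γ.subgroupOf K).map (QuotientGroup.mk' (N.subgroupOf K))

variable (N K) in
def quotientPreimage (L : Subgroup (K ⧸ N.subgroupOf K)) : Subgroup G :=
  (L.comap (QuotientGroup.mk' (N.subgroupOf K))).map K.subtype

lemma relIndex_quotientImage (Γ : Subgroup G) (L : Subgroup (K ⧸ N.subgroupOf K)) :
    (Γ.subgroupOf K ⊔ N.subgroupOf K).relIndex (L.comap (QuotientGroup.mk' _)) =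
      (quotientImage N K Γ).relIndex L := by
  have h := relIndex_comap (quotientImage N K Γ) (QuotientGroup.mk' (N.subgroupOf K))
    (L.comap (QuotientGroup.mk' _))
  rwa [quotientImage, comap_map_eq, QuotientGroup.ker_mk',
    map_comap_eq_self_of_surjective (QuotientGroup.mk'_surjective _)] at h

lemma relIndex_quotientPreimage (Γ : Subgroup G) [Γ.Normal] (hNK : N ≤ K)
    (L : Subgroup (K ⧸ N.subgroupOf K)) :
    Γ.relIndex (quotientPreimage N K L) = Γ.relIndex N * (quotientImage N K Γ).relIndex L := by
  set Γ' := Γ.subgroupOf K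
  set N' := N.subgroupOf K
  set H' := L.comap (QuotientGroup.mk' N')
  have hN'H' : N' ≤ H' := by
    simpa only [H', ← QuotientGroup.ker_mk' N'] using MonoidHom.ker_le_comap _ L
  have hsup : Γ' ⊔ (Γ' ⊔ N') ⊓ H' = Γ' ⊔ N' :=
    le_antisymm (sup_le le_sup_left inf_le_left)
      (sup_le_sup_left (le_inf le_sup_right hN'H') _)
  calc Γ.relIndex (quotientPreimage N K L) = Γ'.relIndex H' := (relIndex_comap Γ K.subtype H').symm
    _ = Γ'.relIndex ((Γ' ⊔ N') ⊓ H') * (Γ' ⊔ N').relIndex H' := by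
      rw [relIndex_inf_mul_relIndex, inf_eq_left.mpr le_sup_left]
    _ = Γ.relIndex N * (quotientImage N K Γ).relIndex L := by
      rw [← relIndex_sup_left, hsup, relIndex_sup_left, relIndex_subgroupOf hNK,
        relIndex_quotientImage]

lemma relIndex_mul_index_quotientImage (Γ : Subgroup G) [Γ.Normal] (hNK : N ≤ K) :
    Γ.relIndex N * (quotientImage N K Γ).index = Γ.relIndex K := by
  have hindex : (quotientImage N K Γ).index = (Γ.subgroupOf K ⊔ N.subgroupOf K).index := by
    simpa only [comap_top, relIndex_top_right] using
      (relIndex_quotientImage (N := N) (K := K) Γ ⊤).symm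
  rw [hindex, ← relIndex_subgroupOf hNK, ← relIndex_sup_left, relIndex_mul_index le_sup_left]
  rfl

lemma logIndexRatio_quotientPreimage (Γ : Subgroup G) [Γ.Normal] [Γ.FiniteIndex] (hNK : N ≤ K)
    (L : Subgroup (K ⧸ N.subgroupOf K)) :
    logIndexRatio Γ (quotientPreimage N K L) = logIndexRatio Γ N +
      (logIndexRatio Γ K - logIndexRatio Γ N) * logIndexRatio (quotientImage N K Γ) L := by
  set Q := quotientImage N K Γ with hQ_def
  have hK : Γ.relIndex N * Q.index = Γ.relIndex K := relIndex_mul_index_quotientImage Γ hNK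
  have hrK : Γ.relIndex K ≠ 0 := (Γ.isFiniteRelIndex_of_finiteIndex (K := K)).relIndex_ne_zero
  have hrN : Γ.relIndex N ≠ 0 := left_ne_zero_of_mul (hK ▸ hrK)
  have hiQ : Q.index ≠ 0 := right_ne_zero_of_mul (hK ▸ hrK)
  have : Q.FiniteIndex := ⟨hiQ⟩
  have hrL : Q.relIndex L ≠ 0 := (Q.isFiniteRelIndex_of_finiteIndex (K := L)).relIndex_ne_zero
  have hdiff : logIndexRatio Γ K - logIndexRatio Γ N = Real.log Q.index / Real.log Γ.index := by
    rw [logIndexRatio, logIndexRatio, ← hK, Nat.cast_mul, Real.log_mul (by positivity)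
      (by positivity)]
    ring
  rw [logIndexRatio, relIndex_quotientPreimage Γ hNK, ← hQ_def, Nat.cast_mul,
    Real.log_mul (by positivity) (by positivity), hdiff, logIndexRatio, logIndexRatio]
  rcases eq_or_ne (Real.log Q.index) 0 with hQ | hQ
  · -- the ratio `log |Q : Q ∩ L| / log |K/N : Q|` is a junk `x / 0`, but its numerator is `0` too
    have hL : Real.log (Q.relIndex L) = 0 := by
      refine le_antisymm (hQ ▸ Real.log_le_log (by positivity) ?_) (Real.log_natCast_nonneg _)
      exact_mod_cast Q.relIndex_le_index L
    simp [hQ, hL]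
  · rw [mul_comm (_ / _), div_mul_div_cancel₀ hQ, add_div]

lemma isClosed_quotientPreimage [TopologicalSpace G] (hK : IsClosed (K : Set G))
    {L : Subgroup (K ⧸ N.subgroupOf K)} (hL : IsClosed (L : Set (K ⧸ N.subgroupOf K))) :
    IsClosed (quotientPreimage N K L : Set G) := by
  rw [quotientPreimage, coe_map, coe_comap]
  exact hK.isClosedEmbedding_subtypeVal.isClosedMap _ (hL.preimage QuotientGroup.continuous_mk)

end Subgroup

theorem interval_in_hausdorff_spectrum_general
    {G : Type*} [Group G] [TopologicalSpace G] [IsTopologicalGroup G] [CompactSpace G]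
    (Gn : ℕ → Subgroup G)
    (hopen : ∀ n, IsOpen (Gn n : Set G)) (hnorm : ∀ n, (Gn n).Normal)
    (N K : Subgroup G) (hNK : N ≤ K) [(N.subgroupOf K).Normal]
    (hKclosed : IsClosed (K : Set G))
    (η κ : ℝ)
    (hNproper : Filter.Tendsto
      (fun n => Real.log ((Gn n).relIndex N : ℝ) / Real.log ((Gn n).index : ℝ))
      Filter.atTop (nhds η))
    (hKproper : Filter.Tendsto
      (fun n => Real.log ((Gn n).relIndex K : ℝ) / Real.log ((Gn n).index : ℝ))
      Filter.atTop (nhds κ))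
    (hfull : hspecFil (K ⧸ N.subgroupOf K)
        (fun n => ((Gn n).subgroupOf K).map (QuotientGroup.mk' (N.subgroupOf K)))
      = Set.Icc (0 : ℝ) 1) :
    Set.Icc η κ ⊆ hspecFil G Gn := by
  rintro r ⟨hηr, hrκ⟩
  have hs : (r - η) / (κ - η) ∈ Set.Icc (0 : ℝ) 1 :=
    ⟨div_nonneg (by linarith) (by linarith), div_le_one_of_le₀ (by linarith) (by linarith)⟩
  rw [← hfull] at hs
  obtain ⟨L, hLclosed, hLdim⟩ := hs
  have (n : ℕ) : (Gn n).FiniteIndex :=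
    have := Subgroup.quotient_finite_of_isOpen _ (hopen n)
    Subgroup.finiteIndex_of_finite_quotient
  refine ⟨Subgroup.quotientPreimage N K L, Subgroup.isClosed_quotientPreimage hKclosed hLclosed, ?_⟩
  calc hdimFil Gn (Subgroup.quotientPreimage N K L)
      = atTop.liminf ((fun n => logIndexRatio (Gn n) N) +
          (fun n => logIndexRatio (Gn n) K - logIndexRatio (Gn n) N) *
            fun n => logIndexRatio (Subgroup.quotientImage N K (Gn n)) L) := by
        rw [hdimFil_eq_liminf]
        congr with n
        have := hnorm n
        exact Subgroup.logIndexRatio_quotientPreimage (Gn n) hNK L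
    _ = η + (κ - η) * ((r - η) / (κ - η)) :=
        (hNproper.liminf_add_mul_eq (hKproper.sub hNproper)
          (Eventually.of_forall fun n => sub_nonneg.mpr (logIndexRatio_mono (Gn n) hNK))
          (Eventually.of_forall fun n => logIndexRatio_nonneg _ L)
          (isBoundedUnder_of_eventually_le
            (Eventually.of_forall fun n => logIndexRatio_le_one _ L))).trans
          (by rw [← hLdim]; rfl)
    _ = r := by
        rcases eq_or_ne (κ - η) 0 with h | h
        · simp only [h, zero_mul, add_zero]; linarith
        · rw [mul_div_cancel₀ _ h]; ring

theorem interval_in_hausdorff_spectrum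
    {G : Type*} [Group G] [TopologicalSpace G] [IsTopologicalGroup G] [CompactSpace G]
    [TotallyDisconnectedSpace G] [T2Space G] [SecondCountableTopology G]
    (Gn : ℕ → Subgroup G)
    (hopen : ∀ n, IsOpen (Gn n : Set G)) (hnorm : ∀ n, (Gn n).Normal)
    (hdesc : ∀ n, Gn (n + 1) ≤ Gn n) (hinter : ⨅ n, Gn n = ⊥)
    (N K : Subgroup G) (hNK : N ≤ K) [(N.subgroupOf K).Normal]
    (hNclosed : IsClosed (N : Set G)) (hKclosed : IsClosed (K : Set G))
    (η κ : ℝ) (hη : hdimFil Gn N = η) (hκ : hdimFil Gn K = κ)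
    (hNproper : Filter.Tendsto
      (fun n => Real.log ((Gn n).relIndex N : ℝ) / Real.log ((Gn n).index : ℝ))
      Filter.atTop (nhds η))
    (hKproper : Filter.Tendsto
      (fun n => Real.log ((Gn n).relIndex K : ℝ) / Real.log ((Gn n).index : ℝ))
      Filter.atTop (nhds κ))
    (hfull : hspecFil (K ⧸ N.subgroupOf K)
        (fun n => ((Gn n).subgroupOf K).map (QuotientGroup.mk' (N.subgroupOf K)))
      = Set.Icc (0 : ℝ) 1) :
    Set.Icc η κ ⊆ hspecFil G Gn :=
  interval_in_hausdorff_spectrum_general Gn hopen hnorm N K hNK hKclosed η κ hNproper hKproper hfull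
end

section
/- Let S be an R-standard group of dimension d over a pro-p domain R with maximal ideal m, i.e. S is identified via a homeomorphism φ with (m^N)^(d) and multiplication is given by a formal group law F over R, and let S_n = φ^{-1}((m^{N+n})^(d)). If R has characteristic p, then for every x ∈ S_n one has x^p ∈ S_{2n}; in particular S_n/S_{2n} is an elementary abelian p-group. -/
/-!
Modulo every monomial that mixes `X` and `Y`, a formal group law is `X + Y`; evaluated at points
of `(m^s)^d` and `(m^t)^d` these monomials lie in `m^(s+t)`. Hence on `Sₖ` (coordinates in `m^k`)
the chart `φ`, read modulo `m^(2k)`, is a homomorphism to the abelian group `(R ⧸ m^(2k))^d`.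
It kills `p`-th powers because `p = 0` in `R`, and commutators because the target is abelian;
finally `N + 2n ≤ 2(N + n)`.
-/

open IsLocalRing

/-- Evaluation of a multivariate power series at a point, as a sum over all monomials
(convergent in the adic topology when the arguments lie in the maximal ideal). -/
noncomputable def fglEval {R : Type*} [CommRing R] [TopologicalSpace R] {σ : Type*}
    (F : MvPowerSeries σ R) (a : σ → R) : R :=
  ∑' m : σ →₀ ℕ, MvPowerSeries.coeff m F * m.prod fun i k => a i ^ k

section AdicEvaluation

open MvPowerSeries Finsupp

variable {R : Type*} [CommRing R] {I : Ideal R} {σ : Type*}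

theorem Finsupp.prod_pow_mem_pow_add {m : σ →₀ ℕ} {a : σ → R} {j₁ j₂ : σ} (hj : j₁ ≠ j₂)
    (h₁ : m j₁ ≠ 0) (h₂ : m j₂ ≠ 0) {s t : ℕ} (ha₁ : a j₁ ∈ I ^ s) (ha₂ : a j₂ ∈ I ^ t) :
    (m.prod fun j k => a j ^ k) ∈ I ^ (s + t) := by
  classical
  have hj₁ : j₁ ∈ m.support := mem_support_iff.mpr h₁
  have hj₂ : j₂ ∈ m.support.erase j₁ :=
    Finset.mem_erase.mpr ⟨hj.symm, mem_support_iff.mpr h₂⟩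
  have hdvd : a j₁ * a j₂ ∣ m.prod fun j k => a j ^ k := by
    rw [Finsupp.prod, ← Finset.mul_prod_erase _ _ hj₁, ← Finset.mul_prod_erase _ _ hj₂,
      ← mul_assoc]
    exact (mul_dvd_mul (dvd_pow_self _ h₁) (dvd_pow_self _ h₂)).mul_right _
  rw [pow_add]
  exact Ideal.mem_of_dvd _ hdvd (Ideal.mul_mem_mul ha₁ ha₂)

variable [TopologicalSpace R]

theorem hasSum_fglEval (hI : IsAdic I) [IsAdicComplete I R] [Finite σ]
    (Φ : MvPowerSeries σ R) {a : σ → R} (ha : ∀ j, a j ∈ I) :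
    HasSum (fun m => coeff m Φ * m.prod fun j k => a j ^ k) (fglEval Φ a) := by
  unfold IsAdic at hI
  subst hI
  let : WithIdeal R := ⟨I⟩
  obtain ⟨_, _⟩ := (IsAdic.isAdicComplete_iff (I := I) rfl).mp inferInstance
  have hev : HasEval a :=
    ⟨fun j => WithIdeal.isTopologicallyNilpotent_of_mem (ha j), by simp [Filter.cofinite_eq_bot]⟩
  exact (hasSum_eval₂ (φ := RingHom.id R) continuous_id hev Φ).summable.hasSum

theorem IsAdic.mem_pow_of_hasSum (hI : IsAdic I) {ι : Type*} {f : ι → R} {x : R}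
    (hf : HasSum f x) {k : ℕ} (hfk : ∀ m, f m ∈ I ^ k) : x ∈ I ^ k := by
  unfold IsAdic at hI
  subst hI
  let : WithIdeal R := ⟨I⟩
  exact (I.openAddSubgroup k).isClosed.mem_of_tendsto hf
    (Filter.Eventually.of_forall fun _ => sum_mem fun m _ => hfk m)

theorem fglEval_sub_mem_pow (hI : IsAdic I) [IsAdicComplete I R] {ι : Type*} [Finite ι]
    {Φ : MvPowerSeries (ι ⊕ ι) R} {i : ι}
    (hX : coeff (single (Sum.inl i) 1) Φ = 1) (hY : coeff (single (Sum.inr i) 1) Φ = 1)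
    (hmixed : ∀ m, coeff m Φ ≠ 0 → m = single (Sum.inl i) 1 ∨ m = single (Sum.inr i) 1 ∨
      (∃ j, m (Sum.inl j) ≠ 0) ∧ (∃ j, m (Sum.inr j) ≠ 0))
    {a : ι ⊕ ι → R} (ha : ∀ j, a j ∈ I) {s t : ℕ} (haX : ∀ j, a (Sum.inl j) ∈ I ^ s)
    (haY : ∀ j, a (Sum.inr j) ∈ I ^ t) :
    fglEval Φ a - a (Sum.inl i) - a (Sum.inr i) ∈ I ^ (s + t) := by
  classical
  unfold IsAdic at hI
  subst hI
  let : WithIdeal R := ⟨I⟩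
  set X : ι ⊕ ι →₀ ℕ := single (Sum.inl i) 1
  set Y : ι ⊕ ι →₀ ℕ := single (Sum.inr i) 1
  have hXY : X ≠ Y := by simp [X, Y, single_eq_single_iff]
  have hlin : HasSum (Pi.single X (a (Sum.inl i)) + Pi.single Y (a (Sum.inr i)))
      (a (Sum.inl i) + a (Sum.inr i)) :=
    (hasSum_pi_single _ _).add (hasSum_pi_single _ _)
  -- after removing the two linear terms, every monomial left is mixed
  rw [sub_sub]
  refine IsAdic.mem_pow_of_hasSum rfl ((hasSum_fglEval rfl Φ ha).sub hlin) fun m => ?_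
  by_cases hmX : m = X
  · subst hmX
    simp [X, hX, hXY]
  by_cases hmY : m = Y
  · subst hmY
    simp [Y, hY, hXY.symm]
  rw [Pi.add_apply, Pi.single_eq_of_ne hmX, Pi.single_eq_of_ne hmY, add_zero, sub_zero]
  by_cases hc : coeff m Φ = 0
  · simp [hc]
  obtain ⟨⟨j₁, h₁⟩, ⟨j₂, h₂⟩⟩ := ((hmixed m hc).resolve_left hmX).resolve_left hmY
  exact Ideal.mul_mem_left _ _ (prod_pow_mem_pow_add Sum.inl_ne_inr h₁ h₂ (haX j₁) (haY j₂))

end AdicEvaluation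

section StandardChart

open scoped commutatorElement

variable {R S ι : Type*} [CommRing R] [Group S]

/-- `levelSet I φ (N + n)` is the paper's `Sₙ`. -/
def levelSet (I : Ideal R) (φ : S → ι → R) (k : ℕ) : Set S :=
  {x | ∀ i, φ x i ∈ I ^ k}

structure IsStandardChart (I : Ideal R) (φ : S → ι → R) : Prop where
  map_one : φ 1 = 0
  map_mul_sub_mem {s t : ℕ} {x y : S} : x ∈ levelSet I φ s → y ∈ levelSet I φ t →
    ∀ i, φ (x * y) i - φ x i - φ y i ∈ I ^ (s + t)

namespace IsStandardChart

variable {I : Ideal R} {φ : S → ι → R} {k : ℕ} {x y : S}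

theorem mul_mem_levelSet (hφ : IsStandardChart I φ) (hx : x ∈ levelSet I φ k)
    (hy : y ∈ levelSet I φ k) : x * y ∈ levelSet I φ k := fun i => by
  have h := Ideal.pow_le_pow_right (Nat.le_add_right k k) (hφ.map_mul_sub_mem hx hy i)
  simpa using add_mem (add_mem h (hy i)) (hx i)

theorem inv_mem_levelSet (hφ : IsStandardChart I φ) (hx : x ∈ levelSet I φ k) :
    x⁻¹ ∈ levelSet I φ k := fun i => by
  have h := hφ.map_mul_sub_mem (t := 0) (y := x⁻¹) hx (fun i => by simp) i
  rw [mul_inv_cancel, hφ.map_one, add_zero] at h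
  simpa using neg_mem (add_mem h (hx i))

def levelSubgroup (hφ : IsStandardChart I φ) (k : ℕ) : Subgroup S where
  carrier := levelSet I φ k
  one_mem' i := by simp [hφ.map_one]
  mul_mem' := hφ.mul_mem_levelSet
  inv_mem' := hφ.inv_mem_levelSet

def levelHom (hφ : IsStandardChart I φ) (k : ℕ) :
    hφ.levelSubgroup k →* Multiplicative (ι → R ⧸ I ^ (k + k)) where
  toFun x := Multiplicative.ofAdd fun i => Ideal.Quotient.mk _ (φ x i)
  map_one' := by ext; simp [hφ.map_one]
  map_mul' x y := by
    ext i
    simp only [Subgroup.coe_mul, toAdd_ofAdd, toAdd_mul, Pi.add_apply]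
    rw [← map_add, Ideal.Quotient.eq, ← sub_sub]
    exact hφ.map_mul_sub_mem x.2 y.2 i

theorem levelHom_eq_one_iff (hφ : IsStandardChart I φ) {x : hφ.levelSubgroup k} :
    hφ.levelHom k x = 1 ↔ (x : S) ∈ levelSet I φ (k + k) := by
  simp [levelHom, levelSet, funext_iff, Ideal.Quotient.eq_zero_iff_mem]

theorem pow_mem_levelSet (hφ : IsStandardChart I φ) {p : ℕ} (hp : (p : R) = 0)
    (hx : x ∈ levelSet I φ k) : x ^ p ∈ levelSet I φ (k + k) := by
  refine (hφ.levelHom_eq_one_iff (x := ⟨x, hx⟩ ^ p)).mp ?_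
  rw [map_pow]
  ext i
  simp [levelHom, ← map_natCast (Ideal.Quotient.mk (I ^ (k + k))) p, hp]

theorem commutator_mem_levelSet (hφ : IsStandardChart I φ) (hx : x ∈ levelSet I φ k)
    (hy : y ∈ levelSet I φ k) : x * y * x⁻¹ * y⁻¹ ∈ levelSet I φ (k + k) :=
  (hφ.levelHom_eq_one_iff (x := ⁅(⟨x, hx⟩ : hφ.levelSubgroup k), ⟨y, hy⟩⁆)).mp <| by
    rw [map_commutatorElement]
    exact commutatorElement_eq_one_iff_commute.mpr (Commute.all _ _)

end IsStandardChart

end StandardChart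

theorem standard_group_p_power_congruence_general
    {R : Type*} [CommRing R] [IsLocalRing R]
    [IsAdicComplete (maximalIdeal R) R]
    [tR : TopologicalSpace R] (hadic : tR = (maximalIdeal R).adicTopology)
    (p : ℕ) [CharP R p]
    (d : ℕ) (F : Fin d → MvPowerSeries (Fin d ⊕ Fin d) R)
    -- the formal group law has the form F(X,Y) = X + Y + G(X,Y)
    (hlinX : ∀ i, MvPowerSeries.coeff (Finsupp.single (Sum.inl i) 1) (F i) = 1)
    (hlinY : ∀ i, MvPowerSeries.coeff (Finsupp.single (Sum.inr i) 1) (F i) = 1)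
    (hform : ∀ i m, MvPowerSeries.coeff m (F i) ≠ 0 →
      m = Finsupp.single (Sum.inl i) 1 ∨ m = Finsupp.single (Sum.inr i) 1 ∨
        ((∃ j, m (Sum.inl j) ≠ 0) ∧ (∃ j, m (Sum.inr j) ≠ 0) ∧
          2 ≤ m.sum fun _ k => k))
    -- the standard group S of level N, identified with (m^N)^(d) via φ
    (S : Type*) [Group S] (N : ℕ) (hN : 1 ≤ N) (φ : S → Fin d → R)
    (hφrange : ∀ x i, φ x i ∈ maximalIdeal R ^ N)
    (hφone : φ 1 = 0)
    (hmul : ∀ x y : S, ∀ i, φ (x * y) i = fglEval (F i) (Sum.elim (φ x) (φ y))) :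
    ∀ n : ℕ, ∀ x : S, (∀ i, φ x i ∈ maximalIdeal R ^ (N + n)) →
      (∀ i, φ (x ^ p) i ∈ maximalIdeal R ^ (N + 2 * n)) ∧
      ∀ y : S, (∀ i, φ y i ∈ maximalIdeal R ^ (N + n)) →
        ∀ i, φ (x * y * x⁻¹ * y⁻¹) i ∈ maximalIdeal R ^ (N + 2 * n) := by
  have hφm : ∀ x i, φ x i ∈ maximalIdeal R := fun x i =>
    Ideal.pow_le_self (by omega) (hφrange x i)
  have hchart : IsStandardChart (maximalIdeal R) φ := by
    refine ⟨hφone, fun {_ _ x y} hx hy i => ?_⟩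
    rw [hmul]
    exact fglEval_sub_mem_pow hadic (hlinX i) (hlinY i)
      (fun m hm => (hform i m hm).imp_right (Or.imp_right fun h => ⟨h.1, h.2.1⟩))
      (Sum.forall.mpr ⟨hφm x, hφm y⟩) hx hy
  intro n x hx
  have hle : maximalIdeal R ^ (N + n + (N + n)) ≤ maximalIdeal R ^ (N + 2 * n) :=
    Ideal.pow_le_pow_right (by omega)
  exact ⟨fun i => hle (hchart.pow_mem_levelSet (CharP.cast_eq_zero R p) hx i),
    fun y hy i => hle (hchart.commutator_mem_levelSet hx hy i)⟩

/-- In an `R`-standard group over a pro-`p` domain `R` of characteristic `p`, if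
`x ∈ Sₙ` then `x ^ p ∈ S₂ₙ`; in particular `Sₙ / S₂ₙ` is an elementary abelian
`p`-group (commutators of elements of `Sₙ` also lie in `S₂ₙ`). -/
theorem standard_group_p_power_congruence
    {R : Type*} [CommRing R] [IsDomain R] [IsNoetherianRing R] [IsLocalRing R]
    [Finite (ResidueField R)] [IsAdicComplete (maximalIdeal R) R]
    [tR : TopologicalSpace R] (hadic : tR = (maximalIdeal R).adicTopology)
    (p : ℕ) [Fact p.Prime] [CharP R p]
    (d : ℕ) (F : Fin d → MvPowerSeries (Fin d ⊕ Fin d) R)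
    -- the formal group law has the form F(X,Y) = X + Y + G(X,Y)
    (hlinX : ∀ i, MvPowerSeries.coeff (Finsupp.single (Sum.inl i) 1) (F i) = 1)
    (hlinY : ∀ i, MvPowerSeries.coeff (Finsupp.single (Sum.inr i) 1) (F i) = 1)
    (hform : ∀ i m, MvPowerSeries.coeff m (F i) ≠ 0 →
      m = Finsupp.single (Sum.inl i) 1 ∨ m = Finsupp.single (Sum.inr i) 1 ∨
        ((∃ j, m (Sum.inl j) ≠ 0) ∧ (∃ j, m (Sum.inr j) ≠ 0) ∧
          2 ≤ m.sum fun _ k => k))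
    -- the standard group S of level N, identified with (m^N)^(d) via φ
    (S : Type*) [Group S] (N : ℕ) (hN : 1 ≤ N) (φ : S → Fin d → R)
    (hφinj : Function.Injective φ)
    (hφrange : ∀ x i, φ x i ∈ maximalIdeal R ^ N)
    (hφsurj : ∀ v : Fin d → R, (∀ i, v i ∈ maximalIdeal R ^ N) → ∃ x, φ x = v)
    (hφone : φ 1 = 0)
    (hmul : ∀ x y : S, ∀ i, φ (x * y) i = fglEval (F i) (Sum.elim (φ x) (φ y))) :
    ∀ n : ℕ, ∀ x : S, (∀ i, φ x i ∈ maximalIdeal R ^ (N + n)) →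
      (∀ i, φ (x ^ p) i ∈ maximalIdeal R ^ (N + 2 * n)) ∧
      ∀ y : S, (∀ i, φ y i ∈ maximalIdeal R ^ (N + n)) →
        ∀ i, φ (x * y * x⁻¹ * y⁻¹) i ∈ maximalIdeal R ^ (N + 2 * n) :=
  standard_group_p_power_congruence_general (tR := tR) hadic p d F hlinX hlinY hform S N hN φ
    hφrange hφone hmul
end

section
/- Let R be a pro-p domain of characteristic p and let S be an abelian R-standard group of dimension d with standard filtration {S_n}. Then every topologically finitely generated closed subgroup H of S satisfies hdim_{S_n}(H) = 0, i.e. liminf_n log|H : H ∩ S_n| / log|S : S_n| = 0. -/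
open IsLocalRing Filter Topology

theorem Ideal.pi_lt_pi {ι R : Type*} [CommRing R] [Nonempty ι] {J J' : Ideal R} (h : J' < J) :
    (Ideal.pi fun _ : ι => J') < Ideal.pi fun _ => J :=
  lt_of_le_not_ge (Ideal.pi_le_pi_iff.mpr fun _ => h.le) fun hle =>
    h.not_ge (Ideal.pi_le_pi_iff.mp hle (Classical.arbitrary ι))

theorem Ideal.pow_succ_lt_pow_of_isDomain {R : Type*} [CommRing R] [IsNoetherianRing R]
    [IsDomain R] {I : Ideal R} (h0 : I ≠ ⊥) (h1 : I ≠ ⊤) (j : ℕ) : I ^ (j + 1) < I ^ j := by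
  refine lt_of_le_of_ne (Ideal.pow_le_pow_right j.le_succ) fun heq => ?_
  have hstable : ∀ k, I ^ (j + k) = I ^ j := by
    intro k
    induction k with
    | zero => rfl
    | succ k ih => rw [← add_assoc, pow_succ, ih, ← pow_succ, heq]
  have hbot : I ^ j = ⊥ := by
    rw [eq_bot_iff, ← Ideal.iInf_pow_eq_bot_of_isDomain I h1]
    exact le_iInf fun k => (hstable k).symm.le.trans (Ideal.pow_le_pow_right (by omega))
  obtain ⟨r, hr, hr0⟩ := Submodule.exists_mem_ne_zero_of_ne_bot h0
  have : r ^ j ∈ I ^ j := Ideal.pow_mem_pow hr j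
  rw [hbot, Ideal.mem_bot] at this
  exact hr0 (pow_eq_zero_iff'.mp this).1

theorem Finsupp.prod_pow_mem_pow_degree {R σ : Type*} [CommRing R] {J : Ideal R} {v : σ → R}
    (hv : ∀ s, v s ∈ J) (m : σ →₀ ℕ) : (m.prod fun s j => v s ^ j) ∈ J ^ m.degree := by
  rw [Finsupp.prod, Finsupp.degree_apply, ← Finset.prod_pow_eq_pow_sum]
  exact Ideal.prod_mem_prod fun s _ => Ideal.pow_mem_pow (hv s) _

section AdicTopology

variable {R : Type*} [CommRing R] [TopologicalSpace R] {I : Ideal R}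

theorem IsAdic.isTopologicalRing (hI : IsAdic I) : IsTopologicalRing R := by
  subst hI
  let : WithIdeal R := ⟨I⟩
  infer_instance

theorem IsAdic.isClosed_pow (hI : IsAdic I) (n : ℕ) :
    IsClosed ((I ^ n : Ideal R) : Set R) := by
  subst hI
  let : WithIdeal R := ⟨I⟩
  exact (I.openAddSubgroup n).isClosed

theorem IsAdic.summable_of_finite_setOf_notMem {ι : Type*} (hI : IsAdic I)
    [IsAdicComplete I R] {f : ι → R} (hf : ∀ n, {i | f i ∉ I ^ n}.Finite) : Summable f := by
  subst hI
  let : WithIdeal R := ⟨I⟩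
  have : CompleteSpace R := (IsAdic.isPrecomplete_iff (I := I) rfl).mp inferInstance
  exact NonarchimedeanAddGroup.summable_of_tendsto_cofinite_zero
    (I.hasBasis_nhds_zero_adic.tendsto_right_iff.mpr fun n _ => hf n)

end AdicTopology

theorem fglEval_sub_sum_mem {R σ : Type*} [CommRing R] [TopologicalSpace R] [Finite σ]
    {I : Ideal R} (hI : IsAdic I) [IsAdicComplete I R]
    (G : MvPowerSeries σ R) {v : σ → R} {M : ℕ} (hM : 0 < M) (hv : ∀ s, v s ∈ I ^ M)
    (t : Finset (σ →₀ ℕ)) {k : ℕ}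
    (hG : ∀ m ∉ t, MvPowerSeries.coeff m G ≠ 0 → k ≤ m.degree) :
    fglEval G v - ∑ m ∈ t, MvPowerSeries.coeff m G * m.prod (fun s j => v s ^ j) ∈
      I ^ (k * M) := by
  set g := fun m : σ →₀ ℕ => MvPowerSeries.coeff m G * m.prod fun s j => v s ^ j
  have hg : ∀ m, g m ∈ I ^ (m.degree * M) := fun m => Ideal.mul_mem_left _ _ (by
    simpa [← pow_mul, mul_comm] using Finsupp.prod_pow_mem_pow_degree hv m)
  have hsum : Summable g := hI.summable_of_finite_setOf_notMem fun n =>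
    (Finsupp.finite_of_degree_lt n).subset fun m hm => not_le.mp fun hn =>
      hm (Ideal.pow_le_pow_right (le_mul_of_le_of_one_le hn hM) (hg m))
  have : T2Space R := (IsAdic.isHausdorff_iff hI).mp inferInstance
  have := hI.isTopologicalRing
  rw [fglEval, ← hsum.sum_add_tsum_compl (s := t), add_sub_cancel_left]
  refine tsum_mem (hI.isClosed_pow _) fun ⟨m, hm⟩ => ?_
  by_cases hc : MvPowerSeries.coeff m G = 0
  · simp [g, hc]
  · exact Ideal.pow_le_pow_right (Nat.mul_le_mul_right M (hG m hm hc)) (hg m)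

/-- `φ` induces additive maps `Sₘ/S₂ₘ → (Iᵐ/I²ᵐ)^ι` on the layers `Sₘ = φ⁻¹ (Iᵐ)^ι`. -/
def IsFirstOrderAdditive {R G ι : Type*} [CommRing R] [Group G] (I : Ideal R)
    (φ : G → ι → R) : Prop :=
  ∀ M, 0 < M → ∀ x y, φ x ∈ Ideal.pi (fun _ => I ^ M) → φ y ∈ Ideal.pi (fun _ => I ^ M) →
    φ (x * y) - (φ x + φ y) ∈ Ideal.pi fun _ => I ^ (2 * M)

theorem IsFirstOrderAdditive.of_fglEval {R G ι : Type*} [CommRing R] [TopologicalSpace R]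
    [Group G] [Finite ι] {I : Ideal R} (hI : IsAdic I) [IsAdicComplete I R]
    (F : ι → MvPowerSeries (ι ⊕ ι) R)
    (hX : ∀ i, MvPowerSeries.coeff (Finsupp.single (Sum.inl i) 1) (F i) = 1)
    (hY : ∀ i, MvPowerSeries.coeff (Finsupp.single (Sum.inr i) 1) (F i) = 1)
    (hF : ∀ i m, MvPowerSeries.coeff m (F i) ≠ 0 →
      m = Finsupp.single (Sum.inl i) 1 ∨ m = Finsupp.single (Sum.inr i) 1 ∨ 2 ≤ m.degree)
    {φ : G → ι → R} (hmul : ∀ x y i, φ (x * y) i = fglEval (F i) (Sum.elim (φ x) (φ y))) :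
    IsFirstOrderAdditive I φ := by
  classical
  intro M hM x y hx hy
  have hv : ∀ s, Sum.elim (φ x) (φ y) s ∈ I ^ M := by
    rintro (s | s)
    exacts [(Ideal.mem_pi _ _).mp hx s, (Ideal.mem_pi _ _).mp hy s]
  refine (Ideal.mem_pi _ _).mpr fun i => ?_
  have hne : (Finsupp.single (Sum.inl i) 1 : ι ⊕ ι →₀ ℕ) ≠ Finsupp.single (Sum.inr i) 1 := by
    simp [Finsupp.single_eq_single_iff]
  have := fglEval_sub_sum_mem hI (F i) hM hv {Finsupp.single (Sum.inl i) 1,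
    Finsupp.single (Sum.inr i) 1} (k := 2) fun m hm hc => by
      simp only [Finset.mem_insert, Finset.mem_singleton, not_or] at hm
      exact ((hF i m hc).resolve_left hm.1).resolve_left hm.2
  simpa [Finset.sum_pair hne, hX, hY, hmul] using this

namespace IsFirstOrderAdditive

variable {R G ι : Type*} [CommRing R] [Group G] {I : Ideal R} {φ : G → ι → R}
  (hφ : IsFirstOrderAdditive I φ) (hφ1 : φ 1 = 0) {M : ℕ} (hM : 0 < M)
include hφ hφ1 hM

theorem map_pow_sub_nsmul_mem {x : G} (hx : φ x ∈ Ideal.pi fun _ => I ^ M) (n : ℕ) :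
    φ (x ^ n) - n • φ x ∈ Ideal.pi fun _ => I ^ (2 * M) := by
  induction n with
  | zero => simp [hφ1]
  | succ n ih =>
    have hxn : φ (x ^ n) ∈ Ideal.pi fun _ => I ^ M := by
      simpa using add_mem (Ideal.pi_le_pi_iff.mpr (fun _ => Ideal.pow_le_pow_right (by omega)) ih)
        (nsmul_mem hx n)
    convert add_mem (hφ M hM _ _ hxn hx) ih using 1
    rw [pow_succ, succ_nsmul]
    abel

theorem map_pow_char_mem (p : ℕ) [CharP R p] {x : G} (hx : φ x ∈ Ideal.pi fun _ => I ^ M) :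
    φ (x ^ p) ∈ Ideal.pi fun _ => I ^ (2 * M) := by
  have hp : p • φ x = 0 := by ext; simp [nsmul_eq_mul, CharP.cast_eq_zero]
  simpa [hp] using hφ.map_pow_sub_nsmul_mem hφ1 hM hx p

theorem map_pow_char_pow_mem (p : ℕ) [CharP R p] {x : G}
    (hx : φ x ∈ Ideal.pi fun _ => I ^ M) (k : ℕ) :
    φ (x ^ p ^ k) ∈ Ideal.pi fun _ => I ^ (2 ^ k * M) := by
  induction k with
  | zero => simpa using hx
  | succ k ih =>
    rw [pow_succ p, pow_mul x, pow_succ 2, mul_comm _ 2, mul_assoc]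
    exact hφ.map_pow_char_mem hφ1 (by positivity) p ih

theorem map_pow_char_pow_log_mem (p : ℕ) [CharP R p] {x : G}
    (hx : φ x ∈ Ideal.pi fun _ => I ^ M) (n : ℕ) :
    φ (x ^ p ^ (Nat.log 2 n + 1)) ∈ Ideal.pi fun _ => I ^ (M + n) := by
  have hn : n + 1 ≤ 2 ^ (Nat.log 2 n + 1) := Nat.lt_pow_succ_log_self one_lt_two n
  refine Ideal.pi_le_pi_iff.mpr (fun _ => Ideal.pow_le_pow_right ?_)
    (hφ.map_pow_char_pow_mem hφ1 hM p hx _)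
  nlinarith [Nat.mul_le_mul_right M hn]

end IsFirstOrderAdditive

theorem lt_of_forall_mem_iff_mem_pi {S ι R : Type*} [Group S] [CommRing R] [Nonempty ι]
    {φ : S → ι → R} {J₀ J J' : Ideal R} {A B : Subgroup S}
    (hsurj : ∀ v ∈ Ideal.pi (fun _ => J₀), ∃ x, φ x = v) (hJ : J ≤ J₀) (hJ' : J' < J)
    (hA : ∀ x, x ∈ A ↔ φ x ∈ Ideal.pi fun _ => J)
    (hB : ∀ x, x ∈ B ↔ φ x ∈ Ideal.pi fun _ => J') : B < A := by
  obtain ⟨v, hv, hv'⟩ := SetLike.exists_of_lt (Ideal.pi_lt_pi (ι := ι) hJ')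
  obtain ⟨x, rfl⟩ := hsurj v (Ideal.pi_le_pi_iff.mpr (fun _ => hJ) hv)
  refine SetLike.lt_iff_le_and_exists.mpr ⟨fun y hy => ?_, x, (hA x).mpr hv,
    fun hx => hv' ((hB x).mp hx)⟩
  exact (hA y).mpr (Ideal.pi_le_pi_iff.mpr (fun _ => hJ'.le) ((hB y).mp hy))

theorem forall_eq_top_or_forall_succ_lt {S ι R : Type*} [Group S] [CommRing R]
    [IsNoetherianRing R] [IsDomain R] {I : Ideal R} (hI : I ≠ ⊤) {φ : S → ι → R} {N : ℕ}
    (hN : 0 < N) (hrange : ∀ x, φ x ∈ Ideal.pi fun _ => I ^ N)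
    (hsurj : ∀ v ∈ Ideal.pi (fun _ => I ^ N), ∃ x, φ x = v) {K : ℕ → Subgroup S}
    (hK : ∀ n x, x ∈ K n ↔ φ x ∈ Ideal.pi fun _ => I ^ (N + n)) :
    (∀ n, K n = ⊤) ∨ ∀ n, K (n + 1) < K n := by
  by_cases h : IsEmpty ι ∨ I = ⊥
  · refine .inl fun n => eq_top_iff.mpr fun x _ =>
      (hK n x).mpr ((Ideal.mem_pi _ _).mpr fun i => ?_)
    rcases h with h | rfl
    · exact isEmptyElim i
    · have := Ideal.pow_le_self hN.ne' ((Ideal.mem_pi _ _).mp (hrange x) i)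
      rw [Ideal.mem_bot.mp this]
      exact zero_mem _
  obtain ⟨hι, h0⟩ := not_or.mp h
  have : Nonempty ι := not_isEmpty_iff.mp hι
  exact .inr fun n => lt_of_forall_mem_iff_mem_pi hsurj (Ideal.pow_le_pow_right (by omega))
    (Ideal.pow_succ_lt_pow_of_isDomain h0 hI (N + n)) (hK n) (hK (n + 1))

namespace Subgroup

theorem card_closure_le_pow {G : Type*} [CommGroup G] (s : Finset G) {e : ℕ}
    (he : 0 < e) (hG : ∀ g : G, g ^ e = 1) : Nat.card (closure (s : Set G)) ≤ e ^ s.card := by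
  classical
  let t : Finset (closure (s : Set G)) := s.preimage Subtype.val Subtype.val_injective.injOn
  have ht : closure (t : Set (closure (s : Set G))) = ⊤ := by simp [t]
  have : Group.FG (closure (s : Set G)) := ⟨⟨t, ht⟩⟩
  calc Nat.card (closure (s : Set G))
      ≤ e ^ Group.rank (closure (s : Set G)) :=
        Nat.le_of_dvd (pow_pos he _) (card_dvd_exponent_pow_rank' _ fun g => Subtype.ext (hG g))
    _ ≤ e ^ t.card := Nat.pow_le_pow_right he (Group.rank_le ht)
    _ ≤ e ^ s.card := Nat.pow_le_pow_right he
        ((Finset.card_preimage ..).trans_le (Finset.card_filter_le _ _))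

theorem relIndex_eq_card_map_mk' {G : Type*} [Group G] (K H : Subgroup G) [K.Normal] :
    K.relIndex H = Nat.card (H.map (QuotientGroup.mk' K)) := by
  rw [← relIndex_bot_left, ← QuotientGroup.map_mk'_self K, relIndex_map_map,
    QuotientGroup.ker_mk', sup_idem, relIndex_sup_right]

theorem relIndex_le_pow_of_le_closure_sup {G : Type*} [CommGroup G] {K H : Subgroup G}
    [K.FiniteIndex] (T : Finset G) (hH : H ≤ closure T ⊔ K) {e : ℕ} (he : 0 < e)
    (hK : ∀ g : G, g ^ e ∈ K) : K.relIndex H ≤ e ^ T.card := by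
  classical
  have hmap : H.map (QuotientGroup.mk' K) ≤
      closure ((T.image (QuotientGroup.mk' K) : Finset _) : Set (G ⧸ K)) :=
    calc H.map (QuotientGroup.mk' K)
        ≤ (closure T ⊔ K).map (QuotientGroup.mk' K) := map_mono hH
      _ = closure ((T.image (QuotientGroup.mk' K) : Finset _) : Set (G ⧸ K)) := by
        rw [map_sup, QuotientGroup.map_mk'_self, sup_bot_eq, MonoidHom.map_closure,
          Finset.coe_image]
  rw [relIndex_eq_card_map_mk']
  calc _ ≤ _ := card_le_of_le hmap
    _ ≤ e ^ (T.image (QuotientGroup.mk' K)).card :=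
        card_closure_le_pow _ he fun g => by
          induction g using QuotientGroup.induction_on with
          | H g => exact (QuotientGroup.eq_one_iff _).mpr (hK g)
    _ ≤ e ^ T.card := Nat.pow_le_pow_right he Finset.card_image_le

theorem topologicalClosure_le_sup_of_isOpen {G : Type*} [Group G] [TopologicalSpace G]
    [IsTopologicalGroup G] (L : Subgroup G) {K : Subgroup G} (hK : IsOpen (K : Set G)) :
    L.topologicalClosure ≤ L ⊔ K :=
  L.topologicalClosure_minimal le_sup_left
    ((L ⊔ K).isClosed_of_isOpen (isOpen_mono le_sup_right hK))

theorem two_pow_le_index {G : Type*} [Group G] {K : ℕ → Subgroup G}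
    (hK : ∀ n, K (n + 1) < K n) [∀ n, (K n).FiniteIndex] (n : ℕ) : 2 ^ n ≤ (K n).index := by
  induction n with
  | zero => exact Nat.one_le_iff_ne_zero.mpr FiniteIndex.index_ne_zero
  | succ n ih =>
    have hmul := relIndex_mul_index (hK n).le
    have h2 : 2 ≤ (K (n + 1)).relIndex (K n) := by
      have : (K (n + 1)).relIndex (K n) ≠ 0 :=
        left_ne_zero_of_mul (hmul ▸ FiniteIndex.index_ne_zero)
      have : (K (n + 1)).relIndex (K n) ≠ 1 := fun h => (hK n).not_ge (relIndex_eq_one.mp h)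
      omega
    rw [← hmul, pow_succ']
    exact Nat.mul_le_mul h2 ih

end Subgroup

theorem tendsto_natLog_succ_div :
    Tendsto (fun n : ℕ => ((Nat.log 2 n + 1 : ℕ) : ℝ) / n) atTop (𝓝 0) := by
  have hlog : Tendsto (fun n : ℕ => Real.log n / n) atTop (𝓝 0) :=
    Real.isLittleO_log_id_atTop.tendsto_div_nhds_zero.comp tendsto_natCast_atTop_atTop
  have hbound : Tendsto (fun n : ℕ => Real.log n / n / Real.log 2 + 1 / n) atTop (𝓝 0) := by
    simpa using (hlog.div_const (Real.log 2)).add tendsto_one_div_atTop_nhds_zero_nat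
  refine squeeze_zero (fun n => by positivity) (fun n => ?_) hbound
  have := Real.natLog_le_logb n 2
  rw [Real.logb, Nat.cast_ofNat] at this
  push_cast
  rw [add_div, div_right_comm]
  gcongr

theorem tendsto_log_div_log_of_le_pow_natLog {a b : ℕ → ℕ} {c : ℕ}
    (ha : ∀ n, a n ≤ c ^ (Nat.log 2 n + 1)) (hb : ∀ n, 2 ^ n ≤ b n) :
    Tendsto (fun n => Real.log (a n) / Real.log (b n)) atTop (𝓝 0) := by
  have hlog2 : 0 < Real.log 2 := Real.log_pos one_lt_two
  have hlim := tendsto_natLog_succ_div.const_mul (Real.log c / Real.log 2)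
  rw [mul_zero] at hlim
  refine squeeze_zero' (.of_forall fun n => ?_) ?_ hlim
  · exact div_nonneg (Real.log_natCast_nonneg _) (Real.log_natCast_nonneg _)
  filter_upwards [eventually_ge_atTop 1] with n hn
  have hnum : Real.log (a n) ≤ (Nat.log 2 n + 1 : ℕ) * Real.log c := by
    rcases (a n).eq_zero_or_pos with h | h
    · rw [h, Nat.cast_zero, Real.log_zero]
      exact mul_nonneg (Nat.cast_nonneg _) (Real.log_natCast_nonneg _)
    · rw [← Real.log_pow, ← Nat.cast_pow]
      exact Real.log_le_log (by exact_mod_cast h) (by exact_mod_cast ha n)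
  have hden : n * Real.log 2 ≤ Real.log (b n) := by
    rw [← Real.log_pow]
    exact Real.log_le_log (by positivity) (by exact_mod_cast hb n)
  calc Real.log (a n) / Real.log (b n)
      ≤ (Nat.log 2 n + 1 : ℕ) * Real.log c / (n * Real.log 2) :=
        div_le_div₀ (by positivity) hnum (by positivity) hden
    _ = Real.log c / Real.log 2 * ((Nat.log 2 n + 1 : ℕ) / n) := by
        field_simp

theorem abelian_standard_group_fg_subgroup_dimension_zero_general
    {R : Type*} [CommRing R] [IsDomain R] [IsNoetherianRing R] [IsLocalRing R]
    [IsAdicComplete (maximalIdeal R) R]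
    [tR : TopologicalSpace R] (hadic : tR = (maximalIdeal R).adicTopology)
    (p : ℕ) [Fact p.Prime] [CharP R p]
    (d : ℕ) (F : Fin d → MvPowerSeries (Fin d ⊕ Fin d) R)
    (hlinX : ∀ i, MvPowerSeries.coeff (Finsupp.single (Sum.inl i) 1) (F i) = 1)
    (hlinY : ∀ i, MvPowerSeries.coeff (Finsupp.single (Sum.inr i) 1) (F i) = 1)
    (hform : ∀ i m, MvPowerSeries.coeff m (F i) ≠ 0 →
      m = Finsupp.single (Sum.inl i) 1 ∨ m = Finsupp.single (Sum.inr i) 1 ∨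
        ((∃ j, m (Sum.inl j) ≠ 0) ∧ (∃ j, m (Sum.inr j) ≠ 0) ∧
          2 ≤ m.sum fun _ k => k))
    -- the abelian standard group S of level N and dimension d, identified with (m^N)^(d)
    (S : Type*) [Group S] [TopologicalSpace S] [IsTopologicalGroup S] [CompactSpace S]
    (hcomm : ∀ x y : S, x * y = y * x)
    (N : ℕ) (hN : 1 ≤ N) (φ : S → Fin d → R)
    (hφrange : ∀ x i, φ x i ∈ maximalIdeal R ^ N)
    (hφsurj : ∀ v : Fin d → R, (∀ i, v i ∈ maximalIdeal R ^ N) → ∃ x, φ x = v)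
    (hφone : φ 1 = 0)
    (hmul : ∀ x y : S, ∀ i, φ (x * y) i = fglEval (F i) (Sum.elim (φ x) (φ y)))
    -- the standard filtration {Sₙ}
    (SG : ℕ → Subgroup S)
    (hSG : ∀ n x, x ∈ SG n ↔ ∀ i, φ x i ∈ maximalIdeal R ^ (N + n))
    (hSGopen : ∀ n, IsOpen (SG n : Set S))
    -- a topologically finitely generated closed subgroup
    (H : Subgroup S)
    (T : Finset S) (hHfg : H = (Subgroup.closure (T : Set S)).topologicalClosure) :
    Filter.atTop.liminf (fun n =>
      Real.log ((SG n).relIndex H : ℝ) / Real.log ((SG n).index : ℝ)) = 0 := by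
  let : CommGroup S := { ‹Group S› with mul_comm := hcomm }
  have hlevel (n : ℕ) (x : S) :
      x ∈ SG n ↔ φ x ∈ Ideal.pi fun _ => maximalIdeal R ^ (N + n) := by
    rw [hSG, Ideal.mem_pi]
  have hrange (x : S) : φ x ∈ Ideal.pi fun _ => maximalIdeal R ^ N :=
    (Ideal.mem_pi _ _).mpr (hφrange x)
  have hφ : IsFirstOrderAdditive (maximalIdeal R) φ := .of_fglEval hadic F hlinX hlinY
    (fun i m h => (hform i m h).imp_right (Or.imp_right fun h => h.2.2)) hmul
  have hexp (n : ℕ) (x : S) : x ^ p ^ (Nat.log 2 n + 1) ∈ SG n :=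
    (hlevel n _).mpr (hφ.map_pow_char_pow_log_mem hφone hN p (hrange x) n)
  have (n : ℕ) : (SG n).FiniteIndex :=
    have := Subgroup.quotient_finite_of_isOpen _ (hSGopen n)
    Subgroup.finiteIndex_of_finite_quotient
  have hrel (n : ℕ) : (SG n).relIndex H ≤ (p ^ T.card) ^ (Nat.log 2 n + 1) := by
    rw [← pow_mul, mul_comm, pow_mul]
    exact Subgroup.relIndex_le_pow_of_le_closure_sup T
      (hHfg ▸ Subgroup.topologicalClosure_le_sup_of_isOpen _ (hSGopen n))
      (pow_pos (Fact.out : p.Prime).pos _) (hexp n)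
  rcases forall_eq_top_or_forall_succ_lt (maximalIdeal.isMaximal R).ne_top hN hrange
    (fun v hv => hφsurj v ((Ideal.mem_pi _ v).mp hv)) hlevel with htop | hstrict
  · simp [htop]
  exact (tendsto_log_div_log_of_le_pow_natLog hrel (Subgroup.two_pow_le_index hstrict)).liminf_eq

/-- In an abelian `R`-standard group over a pro-`p` domain `R` of characteristic `p`,
every topologically finitely generated closed subgroup `H` has Hausdorff dimension `0`
with respect to the standard filtration `{Sₙ}`. -/
theorem abelian_standard_group_fg_subgroup_dimension_zero
    {R : Type*} [CommRing R] [IsDomain R] [IsNoetherianRing R] [IsLocalRing R]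
    [Finite (ResidueField R)] [IsAdicComplete (maximalIdeal R) R]
    [tR : TopologicalSpace R] (hadic : tR = (maximalIdeal R).adicTopology)
    (p : ℕ) [Fact p.Prime] [CharP R p]
    (d : ℕ) (F : Fin d → MvPowerSeries (Fin d ⊕ Fin d) R)
    (hlinX : ∀ i, MvPowerSeries.coeff (Finsupp.single (Sum.inl i) 1) (F i) = 1)
    (hlinY : ∀ i, MvPowerSeries.coeff (Finsupp.single (Sum.inr i) 1) (F i) = 1)
    (hform : ∀ i m, MvPowerSeries.coeff m (F i) ≠ 0 →
      m = Finsupp.single (Sum.inl i) 1 ∨ m = Finsupp.single (Sum.inr i) 1 ∨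
        ((∃ j, m (Sum.inl j) ≠ 0) ∧ (∃ j, m (Sum.inr j) ≠ 0) ∧
          2 ≤ m.sum fun _ k => k))
    -- the abelian standard group S of level N and dimension d, identified with (m^N)^(d)
    (S : Type*) [Group S] [TopologicalSpace S] [IsTopologicalGroup S] [CompactSpace S]
    (hcomm : ∀ x y : S, x * y = y * x)
    (N : ℕ) (hN : 1 ≤ N) (φ : S → Fin d → R)
    (hφinj : Function.Injective φ)
    (hφrange : ∀ x i, φ x i ∈ maximalIdeal R ^ N)
    (hφsurj : ∀ v : Fin d → R, (∀ i, v i ∈ maximalIdeal R ^ N) → ∃ x, φ x = v)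
    (hφone : φ 1 = 0) (hφcont : Continuous φ)
    (hmul : ∀ x y : S, ∀ i, φ (x * y) i = fglEval (F i) (Sum.elim (φ x) (φ y)))
    -- the standard filtration {Sₙ}
    (SG : ℕ → Subgroup S)
    (hSG : ∀ n x, x ∈ SG n ↔ ∀ i, φ x i ∈ maximalIdeal R ^ (N + n))
    (hSGopen : ∀ n, IsOpen (SG n : Set S))
    -- a topologically finitely generated closed subgroup
    (H : Subgroup S) (hHclosed : IsClosed (H : Set S))
    (T : Finset S) (hHfg : H = (Subgroup.closure (T : Set S)).topologicalClosure) :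
    Filter.atTop.liminf (fun n =>
      Real.log ((SG n).relIndex H : ℝ) / Real.log ((SG n).index : ℝ)) = 0 :=
  abelian_standard_group_fg_subgroup_dimension_zero_general (tR := tR) hadic p d F hlinX hlinY hform
    S hcomm N hN φ hφrange hφsurj hφone hmul SG hSG hSGopen H T hHfg
end

section
/- Let G be a finite-dimensional perfect Lie algebra over a field F and let L = G ⊗_F tF[t] with the natural grading L_n = G⊗t^n. Then every graded F-subalgebra of L of infinite codimension is contained in a graded F-subalgebra of infinite codimension which is maximal with respect to that property. -/
/-!
A graded subspace of `L` has finite codimension exactly when it contains every component `L_n`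
with `n` beyond some `D`. Since `G = [G, G]` we have `[L_m, L_n] = L_{m+n}`, so a graded
subalgebra contains all `L_n`, `n > D`, as soon as it contains the finitely many components
`L_{D+1}, …, L_{2D+1}`. These span a finite-dimensional space, so if the union of a chain of
graded subalgebras had finite codimension, that space would already lie in one member of the
chain, which would then have finite codimension too. Hence Zorn's lemma applies.
-/

open scoped TensorProduct
open Polynomial

namespace GradedTFtStmt

variable (F : Type*) [Field F] (G : Type*) [LieRing G] [LieAlgebra F G]

/-- The positive part `G ⊗ tF[t]` inside `F[t] ⊗ G`. -/
noncomputable def posPart : Submodule F (Polynomial F ⊗[F] G) :=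
  Submodule.span F
    {z : Polynomial F ⊗[F] G | ∃ n : ℕ, 1 ≤ n ∧ ∃ g : G, z = (X ^ n : Polynomial F) ⊗ₜ[F] g}

/-- The projection onto the `n`-th homogeneous component `G ⊗ tⁿ` of `F[t] ⊗ G`. -/
noncomputable def proj (n : ℕ) : Polynomial F ⊗[F] G →ₗ[F] Polynomial F ⊗[F] G :=
  (TensorProduct.mk F (Polynomial F) G ((X : Polynomial F) ^ n)).comp
    ((TensorProduct.lid F G).toLinearMap.comp (LinearMap.rTensor G (lcoeff F n)))

/-- A subspace is bracket-closed (an `F`-subalgebra of the Lie algebra). -/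
def IsSubalg (K : Submodule F (Polynomial F ⊗[F] G)) : Prop :=
  ∀ a ∈ K, ∀ b ∈ K, ⁅a, b⁆ ∈ K

/-- A subspace is graded if it contains the homogeneous components of its elements. -/
def IsGraded (K : Submodule F (Polynomial F ⊗[F] G)) : Prop :=
  ∀ z ∈ K, ∀ n : ℕ, proj F G n z ∈ K

/-- A subspace `K ≤ P` has infinite codimension in `P` if `P` is not contained in the sum
of `K` and a finite-dimensional subspace. -/
def InfCodim (K : Submodule F (Polynomial F ⊗[F] G)) : Prop :=
  ¬ ∃ W : Submodule F (Polynomial F ⊗[F] G), FiniteDimensional F W ∧ posPart F G ≤ K ⊔ W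

/-- The homogeneous component `L_n = G ⊗ tⁿ`. -/
noncomputable def component (n : ℕ) : Submodule F (Polynomial F ⊗[F] G) :=
  LinearMap.range (TensorProduct.mk F (Polynomial F) G (X ^ n))

section

variable {F G}

lemma component_le_iff {n : ℕ} {U : Submodule F (Polynomial F ⊗[F] G)} :
    component F G n ≤ U ↔ ∀ g : G, (X ^ n : Polynomial F) ⊗ₜ[F] g ∈ U := by
  simp [component, SetLike.le_def]

lemma fg_component [Module.Finite F G] (n : ℕ) : (component F G n).FG :=
  Module.Finite.iff_fg.mp (Module.Finite.range _)

lemma proj_tmul (n : ℕ) (p : Polynomial F) (g : G) :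
    proj F G n (p ⊗ₜ[F] g) = p.coeff n • ((X ^ n : Polynomial F) ⊗ₜ[F] g) := by
  simp [proj]

lemma proj_X_pow_tmul_self (n : ℕ) (g : G) :
    proj F G n ((X ^ n : Polynomial F) ⊗ₜ[F] g) = (X ^ n : Polynomial F) ⊗ₜ[F] g := by
  rw [proj_tmul, coeff_X_pow_self, one_smul]

lemma exists_forall_proj_eq_zero (z : Polynomial F ⊗[F] G) :
    ∃ D : ℕ, ∀ n, D < n → proj F G n z = 0 := by
  induction z using TensorProduct.induction_on with
  | zero => exact ⟨0, fun n _ => map_zero _⟩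
  | tmul p g =>
    exact ⟨p.natDegree, fun n hn => by
      rw [proj_tmul, coeff_eq_zero_of_natDegree_lt hn, zero_smul]⟩
  | add x y hx hy =>
    obtain ⟨D₁, h₁⟩ := hx
    obtain ⟨D₂, h₂⟩ := hy
    exact ⟨max D₁ D₂, fun n hn => by
      rw [map_add, h₁ n (max_lt_iff.mp hn).1, h₂ n (max_lt_iff.mp hn).2, add_zero]⟩

lemma exists_forall_proj_eq_zero_of_fg {W : Submodule F (Polynomial F ⊗[F] G)}
    (hW : W.FG) : ∃ D : ℕ, ∀ n, D < n → ∀ w ∈ W, proj F G n w = 0 := by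
  obtain ⟨s, rfl⟩ := hW
  choose D hD using fun z : Polynomial F ⊗[F] G => exists_forall_proj_eq_zero z
  refine ⟨s.sup D, fun n hn w hw => ?_⟩
  have hspan : Submodule.span F (s : Set _) ≤ LinearMap.ker (proj F G n) :=
    Submodule.span_le.mpr fun x hx => hD x n ((Finset.le_sup hx).trans_lt hn)
  exact hspan hw

lemma exists_component_le_of_not_infCodim {U : Submodule F (Polynomial F ⊗[F] G)}
    (hU : IsGraded F G U) (h : ¬ InfCodim F G U) :
    ∃ D : ℕ, ∀ n, D < n → component F G n ≤ U := by
  obtain ⟨W, hWfin, hle⟩ := not_not.mp h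
  obtain ⟨D, hD⟩ := exists_forall_proj_eq_zero_of_fg (Module.Finite.iff_fg.mp hWfin)
  refine ⟨D, fun n hn => component_le_iff.mpr fun g => ?_⟩
  have hpos : (X ^ n : Polynomial F) ⊗ₜ[F] g ∈ posPart F G :=
    Submodule.subset_span ⟨n, by omega, g, rfl⟩
  obtain ⟨u, hu, w, hw, huw⟩ := Submodule.mem_sup.mp (hle hpos)
  -- the `n`-th component of `w ∈ W` vanishes, so that of `u ∈ U` is all of `tⁿ ⊗ g`
  have hproj : proj F G n u = (X ^ n : Polynomial F) ⊗ₜ[F] g := by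
    rw [← proj_X_pow_tmul_self, ← huw, map_add, hD n hn w hw, add_zero]
  exact hproj ▸ hU u hu n

lemma not_infCodim_of_component_le [Module.Finite F G] {U : Submodule F (Polynomial F ⊗[F] G)}
    {D : ℕ} (h : ∀ n, D < n → component F G n ≤ U) : ¬ InfCodim F G U := by
  refine not_not.mpr ⟨⨆ n ∈ Finset.range (D + 1), component F G n,
    Module.Finite.iff_fg.mpr (Submodule.fg_biSup _ _ fun n _ => fg_component n), ?_⟩
  refine Submodule.span_le.mpr ?_
  rintro _ ⟨n, -, g, rfl⟩
  rcases le_or_gt n D with hn | hn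
  · refine Submodule.mem_sup_right ?_
    exact (le_iSup₂_of_le (f := fun n _ => component F G n) n
      (Finset.mem_range_succ_iff.mpr hn) le_rfl) ⟨g, rfl⟩
  · exact Submodule.mem_sup_left <| h n hn ⟨g, rfl⟩

lemma component_add_le
    (hperf : ∀ g : G, g ∈ Submodule.span F {z : G | ∃ a b : G, z = ⁅a, b⁆})
    {M : Submodule F (Polynomial F ⊗[F] G)} (hM : IsSubalg F G M)
    {m n : ℕ} (hm : component F G m ≤ M) (hn : component F G n ≤ M) :
    component F G (m + n) ≤ M := by
  have hbrackets : Submodule.span F {z : G | ∃ a b : G, z = ⁅a, b⁆} ≤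
      Submodule.comap (TensorProduct.mk F (Polynomial F) G (X ^ (m + n))) M := by
    refine Submodule.span_le.mpr ?_
    rintro _ ⟨a, b, rfl⟩
    have hbracket : ⁅(X ^ m : Polynomial F) ⊗ₜ[F] a, (X ^ n : Polynomial F) ⊗ₜ[F] b⁆ =
        (X ^ (m + n) : Polynomial F) ⊗ₜ[F] ⁅a, b⁆ := by
      rw [LieAlgebra.ExtendScalars.bracket_tmul, pow_add]
    change (X ^ (m + n) : Polynomial F) ⊗ₜ[F] ⁅a, b⁆ ∈ M
    exact hbracket ▸ hM _ (hm ⟨a, rfl⟩) _ (hn ⟨b, rfl⟩)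
  exact component_le_iff.mpr fun g => hbrackets (hperf g)

lemma component_le_of_forall_Ioc
    (hperf : ∀ g : G, g ∈ Submodule.span F {z : G | ∃ a b : G, z = ⁅a, b⁆})
    {M : Submodule F (Polynomial F ⊗[F] G)} (hM : IsSubalg F G M)
    {D : ℕ} (h : ∀ n ∈ Finset.Ioc D (2 * D + 1), component F G n ≤ M) :
    ∀ n, D < n → component F G n ≤ M := by
  intro n
  induction n using Nat.strong_induction_on with
  | _ n ih =>
    intro hn
    rcases le_or_gt n (2 * D + 1) with hle | hgt
    · exact h n (Finset.mem_Ioc.mpr ⟨hn, hle⟩)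
    · have hsplit : n = (D + 1) + (n - (D + 1)) := by omega
      rw [hsplit]
      exact component_add_le hperf hM (ih _ (by omega) (by omega)) (ih _ (by omega) (by omega))

variable {c : Set (Submodule F (Polynomial F ⊗[F] G))}

lemma isSubalg_sSup_of_directed (hne : c.Nonempty) (hdir : DirectedOn (· ≤ ·) c)
    (halg : ∀ N ∈ c, IsSubalg F G N) : IsSubalg F G (sSup c) := by
  intro a ha b hb
  obtain ⟨N₁, hN₁, ha⟩ := (Submodule.mem_sSup_of_directed hne hdir).mp ha
  obtain ⟨N₂, hN₂, hb⟩ := (Submodule.mem_sSup_of_directed hne hdir).mp hb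
  obtain ⟨N, hN, h₁, h₂⟩ := hdir N₁ hN₁ N₂ hN₂
  exact (Submodule.mem_sSup_of_directed hne hdir).mpr ⟨N, hN, halg N hN a (h₁ ha) b (h₂ hb)⟩

lemma isGraded_sSup_of_directed (hne : c.Nonempty) (hdir : DirectedOn (· ≤ ·) c)
    (hgr : ∀ N ∈ c, IsGraded F G N) : IsGraded F G (sSup c) := by
  intro z hz n
  obtain ⟨N, hN, hz⟩ := (Submodule.mem_sSup_of_directed hne hdir).mp hz
  exact (Submodule.mem_sSup_of_directed hne hdir).mpr ⟨N, hN, hgr N hN z hz n⟩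

lemma infCodim_sSup_of_directed [Module.Finite F G]
    (hperf : ∀ g : G, g ∈ Submodule.span F {z : G | ∃ a b : G, z = ⁅a, b⁆})
    (hne : c.Nonempty) (hdir : DirectedOn (· ≤ ·) c) (halg : ∀ N ∈ c, IsSubalg F G N)
    (hgr : ∀ N ∈ c, IsGraded F G N) (hinf : ∀ N ∈ c, InfCodim F G N) :
    InfCodim F G (sSup c) := by
  intro hfin
  obtain ⟨D, hD⟩ := exists_component_le_of_not_infCodim
    (isGraded_sSup_of_directed hne hdir hgr) (not_not.mpr hfin)
  -- the finitely many components `L_n`, `D < n ≤ 2D + 1`, span a finitely generated subspace,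
  -- so they already lie in a single member of the chain
  have hwindow : (⨆ n ∈ Finset.Ioc D (2 * D + 1), component F G n).FG :=
    Submodule.fg_biSup _ _ fun n _ => fg_component n
  obtain ⟨N, hN, hwindowN⟩ :=
    (CompleteLattice.isCompactElement_iff_le_of_directed_sSup_le _ _).mp
      ((Submodule.fg_iff_compact _).mp hwindow) c hne hdir
      (iSup₂_le fun n hn => hD n (Finset.mem_Ioc.mp hn).1)
  have hwindow_le : ∀ n ∈ Finset.Ioc D (2 * D + 1), component F G n ≤ N := fun n hn =>
    (le_iSup₂_of_le (f := fun n _ => component F G n) n hn le_rfl).trans hwindowN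
  exact not_infCodim_of_component_le
    (component_le_of_forall_Ioc hperf (halg N hN) hwindow_le) (hinf N hN)

end

/-- For a finite-dimensional perfect Lie algebra `G` over a field `F`, every graded
subalgebra of `L = G ⊗ tF[t]` of infinite codimension is contained in one which is maximal
among graded subalgebras of infinite codimension. -/
theorem exists_maximal_graded_subalgebra_of_infinite_codimension
    [FiniteDimensional F G]
    (hperf : ∀ g : G, g ∈ Submodule.span F {z : G | ∃ a b : G, z = ⁅a, b⁆})
    (K : Submodule F (Polynomial F ⊗[F] G))
    (hKP : K ≤ posPart F G) (hKalg : IsSubalg F G K) (hKgr : IsGraded F G K)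
    (hKcodim : InfCodim F G K) :
    ∃ M : Submodule F (Polynomial F ⊗[F] G),
      K ≤ M ∧ M ≤ posPart F G ∧ IsSubalg F G M ∧ IsGraded F G M ∧ InfCodim F G M ∧
      ∀ M' : Submodule F (Polynomial F ⊗[F] G),
        M' ≤ posPart F G → IsSubalg F G M' → IsGraded F G M' → InfCodim F G M' →
        M ≤ M' → M' = M := by
  set S : Set (Submodule F (Polynomial F ⊗[F] G)) :=
    {M | K ≤ M ∧ M ≤ posPart F G ∧ IsSubalg F G M ∧ IsGraded F G M ∧ InfCodim F G M}
  have hchain :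
      ∀ c ⊆ S, IsChain (· ≤ ·) c → ∀ N ∈ c, ∃ ub ∈ S, ∀ N' ∈ c, N' ≤ ub := by
    intro c hcS hc N hN
    choose _ hP halg hgr hinf using fun N' (hN' : N' ∈ c) => hcS hN'
    have hne : c.Nonempty := ⟨N, hN⟩
    refine ⟨sSup c, ⟨(hcS hN).1.trans (le_sSup hN), sSup_le hP,
      isSubalg_sSup_of_directed hne hc.directedOn halg,
      isGraded_sSup_of_directed hne hc.directedOn hgr,
      infCodim_sSup_of_directed hperf hne hc.directedOn halg hgr hinf⟩,
      fun N' hN' => le_sSup hN'⟩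
  obtain ⟨M, hKM, ⟨-, hMP, hMalg, hMgr, hMcodim⟩, hMmax⟩ :=
    zorn_le_nonempty₀ S hchain K ⟨le_rfl, hKP, hKalg, hKgr, hKcodim⟩
  exact ⟨M, hKM, hMP, hMalg, hMgr, hMcodim, fun M' hM'P hM'alg hM'gr hM'codim hMM' =>
    le_antisymm (hMmax ⟨hKM.trans hMM', hM'P, hM'alg, hM'gr, hM'codim⟩ hMM') hMM'⟩

end GradedTFtStmt
end
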